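/- (Kozlov's theorem, part (i).) Consider a discrete-time random walk in a time-dependent random environment with law ℙ on Ω^ℕ stationary under all space-time shifts (note every ω ∈ Ω^ℕ satisfies ω_n(x,e) > 0 for all e ∈ U by definition of 𝒫(U)). Assume {θ_{1,z} : z ∈ U} is an ergodic family of transformations for ℙ. If ν is an invariant probability measure for the environmental process which is absolutely continuous with respect to ℙ, then ν is equivalent to ℙ (i.e., ℙ is also absolutely continuous with respect to ν). -/

import Mathlib

/-!
Let `f = dν/dℙ` and `B = {f = 0}`, so that `ν B = 0`. Invariance of `ν`, together with the
positivity of all jump weights, gives `ν (θ_{1,e}⁻¹ B) = 0`, i.e. `θ_{1,e}⁻¹ B ⊆ B` up to a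
`ℙ`-null set; as `θ_{1,e}` preserves `ℙ`, the two sets agree `ℙ`-a.e. The shifts `θ_{1,e}`
commute, so `B` is `ℙ`-a.e. equal to a set invariant under all of them, and ergodicity gives
`ℙ B ∈ {0, 1}`. `ℙ B = 1` would force `ν = 0`, hence `f > 0` `ℙ`-a.e. and `ℙ ≪ ν`.
-/

open MeasureTheory

namespace KozlovPartOne

/-- Points of the lattice `ℤ^d`. -/
abbrev Zd (d : ℕ) := Fin d → ℤ

/-- The space `Ω^ℕ` of time-dependent environments. -/
abbrev EnvSpace (d : ℕ) := ℕ → Zd d → Zd d → ℝ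

/-- The space-time shift `θ_{n,x}`. -/
def thetaShift (d : ℕ) (n : ℕ) (x : Zd d) (ω : EnvSpace d) : EnvSpace d :=
  fun m y e => ω (n + m) (y + x) e

/-- `ω` is an honest environment with jump range `U` (in particular `ω_n(x,e) > 0` for
every `e ∈ U`, as in the definition of `𝒫(U)`). -/
def IsEnv (d : ℕ) (U : Finset (Zd d)) (ω : EnvSpace d) : Prop :=
  ∀ n x, (∀ e ∈ U, 0 < ω n x e) ∧ (∀ e, e ∉ U → ω n x e = 0) ∧ (∑ e ∈ U, ω n x e = 1)

/-- The transition operator of the environmental process. -/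
def Rop (d : ℕ) (U : Finset (Zd d)) (g : EnvSpace d → ℝ) (ω : EnvSpace d) : ℝ :=
  ∑ e ∈ U, ω 0 0 e * g (thetaShift d 1 e ω)

/-- `ν` is an invariant distribution for the environmental process. -/
def IsInvariantMeasure (d : ℕ) (U : Finset (Zd d)) (ν : Measure (EnvSpace d)) : Prop :=
  ∀ g : EnvSpace d → ℝ, Measurable g → (∃ C, ∀ ω, |g ω| ≤ C) →
    ∫ ω, Rop d U g ω ∂ν = ∫ ω, g ω ∂ν

open Filter

section InvariantSets

variable {α ι : Type*} {T : ι → α → α}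

/-- `wordMap T [i₁, …, iₙ] = T iₙ ∘ ⋯ ∘ T i₁`. -/
def wordMap (T : ι → α → α) : List ι → α → α
  | [] => id
  | i :: l => wordMap T l ∘ T i

theorem commute_wordMap (hT : ∀ i j, Function.Commute (T i) (T j)) (i : ι) :
    ∀ l, Function.Commute (T i) (wordMap T l)
  | [] => Function.Commute.id_right
  | j :: l => (commute_wordMap hT i l).comp_right (hT i j)

variable [MeasurableSpace α] {μ : Measure α}

theorem quasiMeasurePreserving_wordMap (hT : ∀ i, Measure.QuasiMeasurePreserving (T i) μ μ) :
    ∀ l, Measure.QuasiMeasurePreserving (wordMap T l) μ μ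
  | [] => Measure.QuasiMeasurePreserving.id μ
  | i :: l => (quasiMeasurePreserving_wordMap hT l).comp (hT i)

theorem preimage_wordMap_ae_eq (hT : ∀ i, Measure.QuasiMeasurePreserving (T i) μ μ)
    {s : Set α} (hs : ∀ i, T i ⁻¹' s =ᵐ[μ] s) : ∀ l, wordMap T l ⁻¹' s =ᵐ[μ] s
  | [] => EventuallyEq.rfl
  | i :: l => by
    rw [wordMap, Set.preimage_comp]
    exact ((hT i).preimage_ae_eq (preimage_wordMap_ae_eq hT hs l)).trans (hs i)

/-- The set is `⋃ᵥ v⁻¹' (⋂ᵤ u⁻¹' s)` over all words `u, v`: the inner intersection is mapped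
into itself by every `T i`, and commutativity turns this into exact invariance of the union. -/
theorem exists_preimage_eq_of_preimage_ae [Countable ι]
    (hT : ∀ i, Measure.QuasiMeasurePreserving (T i) μ μ)
    (hcomm : ∀ i j, Function.Commute (T i) (T j)) {s : Set α} (hs : MeasurableSet s)
    (hs' : ∀ i, T i ⁻¹' s =ᵐ[μ] s) :
    ∃ t, MeasurableSet t ∧ t =ᵐ[μ] s ∧ ∀ i, T i ⁻¹' t = t := by
  set t₀ := ⋂ l, wordMap T l ⁻¹' s
  have ht₀_mem : ∀ i x, x ∈ t₀ → T i x ∈ t₀ := by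
    simp only [t₀, Set.mem_iInter, Set.mem_preimage]
    exact fun i x hx l => hx (i :: l)
  have ht₀ : t₀ =ᵐ[μ] s := by
    simpa only [Set.iInter_const] using
      Filter.EventuallyEq.countable_iInter fun l => preimage_wordMap_ae_eq hT hs' l
  refine ⟨⋃ l, wordMap T l ⁻¹' t₀, ?_, ?_, fun i => ?_⟩
  · exact .iUnion fun l => (quasiMeasurePreserving_wordMap hT l).measurable <|
      .iInter fun l' => (quasiMeasurePreserving_wordMap hT l').measurable hs
  · simpa only [Set.iUnion_const] using Filter.EventuallyEq.countable_iUnion fun l =>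
      ((quasiMeasurePreserving_wordMap hT l).preimage_ae_eq ht₀).trans
        (preimage_wordMap_ae_eq hT hs' l)
  · ext x
    simp only [Set.mem_preimage, Set.mem_iUnion]
    constructor
    · rintro ⟨l, hl⟩
      exact ⟨i :: l, hl⟩
    · rintro ⟨l, hl⟩
      exact ⟨l, commute_wordMap hcomm i l x ▸ ht₀_mem i _ hl⟩

theorem _root_.MeasureTheory.MeasurePreserving.preimage_ae_eq_of_ae_le [IsFiniteMeasure μ]
    {f : α → α} (hf : MeasurePreserving f μ μ) {s : Set α} (hs : NullMeasurableSet s μ)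
    (h : f ⁻¹' s ≤ᵐ[μ] s) : f ⁻¹' s =ᵐ[μ] s :=
  ae_eq_of_ae_subset_of_measure_ge h (hf.measure_preimage hs).ge
    (hs.preimage hf.quasiMeasurePreserving) (measure_ne_top μ s)

end InvariantSets

section RadonNikodym

variable {α : Type*} [MeasurableSpace α] {ν P : Measure α} [SigmaFinite ν] [SigmaFinite P]

theorem measure_setOf_rnDeriv_eq_zero (hac : ν ≪ P) : ν {x | ν.rnDeriv P x = 0} = 0 :=
  measure_eq_zero_iff_ae_notMem.2 <| (Measure.rnDeriv_pos hac).mono fun _ h => h.ne'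

theorem ae_le_setOf_rnDeriv_eq_zero (hac : ν ≪ P) {s : Set α} (hs : MeasurableSet s)
    (hνs : ν s = 0) : s ≤ᵐ[P] {x | ν.rnDeriv P x = 0} := by
  rwa [← Measure.setLIntegral_rnDeriv hac, setLIntegral_eq_zero_iff hs
    (Measure.measurable_rnDeriv ν P)] at hνs

theorem absolutelyContinuous_of_ae_rnDeriv_ne_zero (hac : ν ≪ P)
    (h : ∀ᵐ x ∂P, ν.rnDeriv P x ≠ 0) : P ≪ ν := by
  rw [← Measure.withDensity_rnDeriv_eq ν P hac]
  exact withDensity_absolutelyContinuous' (Measure.measurable_rnDeriv ν P).aemeasurable h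

theorem not_ae_rnDeriv_eq_zero (hac : ν ≪ P) (hν : ν ≠ 0) : ¬∀ᵐ x ∂P, ν.rnDeriv P x = 0 :=
  fun h => hν <| Measure.eq_zero_of_absolutelyContinuous_of_mutuallySingular hac <|
    (Measure.rnDeriv_eq_zero ν P).1 h

end RadonNikodym

section Environment

variable {d : ℕ} {U : Finset (Zd d)}

@[fun_prop]
theorem measurable_thetaShift (n : ℕ) (x : Zd d) : Measurable (thetaShift d n x) := by
  unfold thetaShift
  fun_prop

theorem commute_thetaShift_one (x y : Zd d) :
    Function.Commute (thetaShift d 1 x) (thetaShift d 1 y) := fun ω => by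
  funext m z e
  simp only [thetaShift, add_right_comm z x y]

theorem measurable_Rop {g : EnvSpace d → ℝ} (hg : Measurable g) : Measurable (Rop d U g) := by
  unfold Rop
  fun_prop

theorem Rop_indicator_one_nonneg {ω : EnvSpace d} (hω : IsEnv d U ω) (s : Set (EnvSpace d)) :
    0 ≤ Rop d U (s.indicator 1) ω :=
  Finset.sum_nonneg fun e he => mul_nonneg ((hω 0 0).1 e he).le (Set.indicator_nonneg (by simp) _)

theorem Rop_indicator_one_le_one {ω : EnvSpace d} (hω : IsEnv d U ω) (s : Set (EnvSpace d)) :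
    Rop d U (s.indicator 1) ω ≤ 1 := by
  calc Rop d U (s.indicator 1) ω ≤ ∑ e ∈ U, ω 0 0 e := by
        refine Finset.sum_le_sum fun e he => mul_le_of_le_one_right ((hω 0 0).1 e he).le ?_
        exact Set.indicator_le_self' (fun _ _ => zero_le_one) _
    _ = 1 := (hω 0 0).2.2

theorem Rop_indicator_one_pos {ω : EnvSpace d} (hω : IsEnv d U ω) {s : Set (EnvSpace d)}
    {e : Zd d} (he : e ∈ U) (hωs : thetaShift d 1 e ω ∈ s) :
    0 < Rop d U (s.indicator 1) ω := by
  calc 0 < ω 0 0 e * s.indicator 1 (thetaShift d 1 e ω) := by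
        simpa [Set.indicator_of_mem hωs] using (hω 0 0).1 e he
    _ ≤ Rop d U (s.indicator 1) ω :=
        Finset.single_le_sum (f := fun e => ω 0 0 e * s.indicator 1 (thetaShift d 1 e ω))
          (fun e' he' => mul_nonneg ((hω 0 0).1 e' he').le (Set.indicator_nonneg (by simp) _)) he

/-- Tested against `1_s`, invariance gives `∫ R 1_s dν = ν s = 0`; since every jump in `U` has
positive weight, `R 1_s` charges the whole of `θ_{1,e}⁻¹ s`. -/
theorem IsInvariantMeasure.measure_preimage_thetaShift_eq_zero {ν : Measure (EnvSpace d)}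
    [IsFiniteMeasure ν] (hinv : IsInvariantMeasure d U ν) (henv : ∀ᵐ ω ∂ν, IsEnv d U ω)
    {e : Zd d} (he : e ∈ U) {s : Set (EnvSpace d)} (hs : MeasurableSet s) (hνs : ν s = 0) :
    ν (thetaShift d 1 e ⁻¹' s) = 0 := by
  have hg : Measurable (s.indicator (1 : EnvSpace d → ℝ)) := measurable_one.indicator hs
  have hRg := measurable_Rop (U := U) hg
  have hRg_int : Integrable (Rop d U (s.indicator 1)) ν := by
    refine Integrable.of_bound hRg.aestronglyMeasurable 1 (henv.mono fun ω hω => ?_)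
    rw [Real.norm_eq_abs, abs_of_nonneg (Rop_indicator_one_nonneg hω s)]
    exact Rop_indicator_one_le_one hω s
  have hbound : ∃ C, ∀ ω, |s.indicator (1 : EnvSpace d → ℝ) ω| ≤ C :=
    ⟨1, fun ω => by by_cases h : ω ∈ s <;> simp [h]⟩
  have hRg_zero : Rop d U (s.indicator 1) =ᵐ[ν] 0 := by
    refine (integral_eq_zero_iff_of_nonneg_ae
      (henv.mono fun ω hω => Rop_indicator_one_nonneg hω s) hRg_int).1 ?_
    rw [hinv _ hg hbound, integral_indicator_one hs, measureReal_def, hνs, ENNReal.toReal_zero]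
  rw [measure_eq_zero_iff_ae_notMem]
  filter_upwards [henv, hRg_zero] with ω hω hω0 hωs
  exact (Rop_indicator_one_pos hω he hωs).ne' hω0

end Environment

theorem invariant_measure_equivalent {d : ℕ}
    (U : Finset (Zd d))
    (P : Measure (EnvSpace d)) [IsProbabilityMeasure P]
    (hsupp : ∀ᵐ ω ∂P, IsEnv d U ω)
    (hstat : ∀ (n : ℕ) (x : Zd d), P.map (thetaShift d n x) = P)
    (herg : ∀ A : Set (EnvSpace d), MeasurableSet A →
      (∀ e ∈ U, thetaShift d 1 e ⁻¹' A = A) → P A = 0 ∨ P A = 1)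
    (ν : Measure (EnvSpace d)) [IsProbabilityMeasure ν]
    (hinv : IsInvariantMeasure d U ν) (hac : ν ≪ P) :
    P ≪ ν := by
  set B := {ω | ν.rnDeriv P ω = 0}
  have hB : MeasurableSet B := Measure.measurable_rnDeriv ν P (measurableSet_singleton 0)
  have hshift (e : Zd d) : MeasurePreserving (thetaShift d 1 e) P P :=
    ⟨measurable_thetaShift 1 e, hstat 1 e⟩
  have hB_inv (e : U) : thetaShift d 1 e ⁻¹' B =ᵐ[P] B :=
    (hshift e).preimage_ae_eq_of_ae_le hB.nullMeasurableSet <|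
      ae_le_setOf_rnDeriv_eq_zero hac (measurable_thetaShift 1 e hB) <|
        hinv.measure_preimage_thetaShift_eq_zero (hac.ae_le hsupp) e.2 hB
          (measure_setOf_rnDeriv_eq_zero hac)
  obtain ⟨t, ht, htB, ht_inv⟩ := exists_preimage_eq_of_preimage_ae
    (T := fun e : U => thetaShift d 1 e) (fun e => (hshift e).quasiMeasurePreserving)
    (fun _ _ => commute_thetaShift_one _ _) hB hB_inv
  rcases herg t ht (fun e he => ht_inv ⟨e, he⟩) with hP | hP
  · rw [measure_congr htB] at hP
    exact absolutelyContinuous_of_ae_rnDeriv_ne_zero hac (measure_eq_zero_iff_ae_notMem.1 hP)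
  · rw [measure_congr htB, ← measure_univ (μ := P),
      ← ae_iff_measure_eq hB.nullMeasurableSet] at hP
    exact absurd hP (not_ae_rnDeriv_eq_zero hac (IsProbabilityMeasure.ne_zero ν))

end KozlovPartOne
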